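/- arXiv:1105.2391 — 2 statements merged into one kernel-verified Lean document; each statement's English description precedes it below -/
import Mathlib

section
/- (Tree minus its s–t path is a T-join.) Let H be a spanning tree of the complete graph on V, and let P be the unique path in H between s and t. Let T be the wrong-parity set of H. Then in the edge set H \ P (the edges of H not on P), a vertex of V has odd degree if and only if it belongs to T; in other words, H \ P is a T-join. -/
open Finset

namespace TSPPath

noncomputable section
open scoped Classical

/-- Edge set of the complete graph on `Fin n`: all unordered pairs of distinct vertices. -/
def Edges (n : ℕ) : Finset (Sym2 (Fin n)) := Finset.univ.filter (fun e => ¬ e.IsDiag)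

/-- `cutSet n S` is `δ(S)`: the edges with exactly one endpoint in `S`. -/
def cutSet (n : ℕ) (S : Finset (Fin n)) : Finset (Sym2 (Fin n)) :=
  (Edges n).filter (fun e => ∃ u v : Fin n, e = s(u, v) ∧ u ∈ S ∧ v ∉ S)

/-- `inSet n S` is `E(S)`: the edges with both endpoints in `S`. -/
def inSet (n : ℕ) (S : Finset (Fin n)) : Finset (Sym2 (Fin n)) :=
  (Edges n).filter (fun e => ∀ v ∈ e, v ∈ S)

/-- Degree of a vertex in an edge set. -/
def deg (n : ℕ) (H : Finset (Sym2 (Fin n))) (v : Fin n) : ℕ :=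
  (H.filter (fun e => v ∈ e)).card

/-- Degree of a vertex in an edge multiset (counting multiplicity). -/
def mdeg (n : ℕ) (L : Multiset (Sym2 (Fin n))) (v : Fin n) : ℕ :=
  (L.filter (fun e => v ∈ e)).card

/-- Feasibility for the path-variant Held–Karp relaxation with endpoints `s, t`. -/
def HKPathFeasible (n : ℕ) (s t : Fin n) (x : Sym2 (Fin n) → ℝ) : Prop :=
  (∀ e, 0 ≤ x e) ∧
  (∑ e ∈ cutSet n {s}, x e = 1) ∧
  (∑ e ∈ cutSet n {t}, x e = 1) ∧
  (∀ v : Fin n, v ≠ s → v ≠ t → ∑ e ∈ cutSet n {v}, x e = 2) ∧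
  (∀ S : Finset (Fin n), S.Nonempty → S ≠ Finset.univ →
      ((s ∈ S ∧ t ∉ S) ∨ (s ∉ S ∧ t ∈ S)) → 1 ≤ ∑ e ∈ cutSet n S, x e) ∧
  (∀ S : Finset (Fin n), S.Nonempty → S ≠ Finset.univ →
      ¬((s ∈ S ∧ t ∉ S) ∨ (s ∉ S ∧ t ∈ S)) → 2 ≤ ∑ e ∈ cutSet n S, x e)

/-- `c` is a metric: nonnegative, symmetric, vanishing on the diagonal, triangle inequality. -/
def IsMetric (n : ℕ) (c : Fin n → Fin n → ℝ) : Prop :=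
  (∀ u v, 0 ≤ c u v) ∧ (∀ u v, c u v = c v u) ∧ (∀ u, c u u = 0) ∧
  (∀ u v w, c u w ≤ c u v + c v w)

/-- Cost of an unordered edge (defined by symmetrization, which agrees with `c u v`
whenever `c` is symmetric). -/
def ecost (n : ℕ) (c : Fin n → Fin n → ℝ) (e : Sym2 (Fin n)) : ℝ :=
  Sym2.lift ⟨fun u v => (c u v + c v u) / 2, by intro u v; ring⟩ e

/-- `c(x) = ∑_{e ∈ E} x_e c(e)`. -/
def xcost (n : ℕ) (c : Fin n → Fin n → ℝ) (x : Sym2 (Fin n) → ℝ) : ℝ :=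
  ∑ e ∈ Edges n, x e * ecost n c e

/-- `c(F) = ∑_{e ∈ F} c(e)` for an edge set `F`. -/
def fcost (n : ℕ) (c : Fin n → Fin n → ℝ) (F : Finset (Sym2 (Fin n))) : ℝ :=
  ∑ e ∈ F, ecost n c e

/-- `H` is (the edge set of) a spanning tree of the complete graph on `Fin n`. -/
def IsSpanningTree (n : ℕ) (H : Finset (Sym2 (Fin n))) : Prop :=
  H ⊆ Edges n ∧ (SimpleGraph.fromEdgeSet (H : Set (Sym2 (Fin n)))).Connected ∧
    H.card = n - 1

/-- The wrong-parity set of an edge set `H`: internal vertices of odd degree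
together with the endpoints of even degree. -/
def wrongParity (n : ℕ) (s t : Fin n) (H : Finset (Sym2 (Fin n))) : Finset (Fin n) :=
  Finset.univ.filter (fun v =>
    if v = s ∨ v = t then Even (deg n H v) else Odd (deg n H v))

/-- `M` is a perfect matching on the vertex set `T`: vertex-disjoint edges covering
exactly the vertices of `T`. -/
def IsPerfectMatchingOn (n : ℕ) (T : Finset (Fin n)) (M : Finset (Sym2 (Fin n))) : Prop :=
  M ⊆ Edges n ∧ (∀ v ∈ T, deg n M v = 1) ∧ (∀ v : Fin n, v ∉ T → deg n M v = 0)

/-- `J` is a `T`-join: exactly the vertices of `T` have odd degree in `J`. -/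
def IsTJoin (n : ℕ) (T : Finset (Fin n)) (J : Finset (Sym2 (Fin n))) : Prop :=
  J ⊆ Edges n ∧ ∀ v : Fin n, Odd (deg n J v) ↔ v ∈ T

/-- There is a Hamiltonian path from `s` to `t` in the complete graph on `Fin n`
of cost (w.r.t. the metric `c`) at most `B`. -/
def ExistsHamPath (n : ℕ) (s t : Fin n) (c : Fin n → Fin n → ℝ) (B : ℝ) : Prop :=
  ∃ p : (⊤ : SimpleGraph (Fin n)).Walk s t,
    p.IsHamiltonian ∧ (p.edges.map (ecost n c)).sum ≤ B

/-- Connectivity of the multigraph `(V, L)` (equivalently, of its support graph,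
which must span all of `Fin n`). -/
def MConnected (n : ℕ) (L : Multiset (Sym2 (Fin n))) : Prop :=
  (SimpleGraph.fromEdgeSet {e | e ∈ L}).Connected

/-- The multiset of edges traversed by the walk given by a vertex list `w`. -/
def walkEdges (n : ℕ) (w : List (Fin n)) : Multiset (Sym2 (Fin n)) :=
  ((w.zip w.tail).map (fun p => s(p.1, p.2)) : List (Sym2 (Fin n)))

/-- `w` is an Eulerian trail from `s` to `t` of the edge multiset `L`: a walk from `s`
to `t` whose multiset of traversed edges is exactly `L` (with multiplicity). -/
def IsEulerianTrail (n : ℕ) (L : Multiset (Sym2 (Fin n))) (s t : Fin n)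
    (w : List (Fin n)) : Prop :=
  w.head? = some s ∧ w.getLast? = some t ∧ walkEdges n w = L

theorem deg_sdiff_add_deg {n : ℕ} {F H : Finset (Sym2 (Fin n))} (hFH : F ⊆ H) (v : Fin n) :
    deg n (H \ F) v + deg n F v = deg n H v := by
  unfold deg
  rw [← Finset.card_union_of_disjoint (Finset.disjoint_filter_filter Finset.sdiff_disjoint),
    ← Finset.filter_union, Finset.sdiff_union_of_subset hFH]

theorem deg_edges_toFinset_of_isTrail {n : ℕ} {G : SimpleGraph (Fin n)}
    {u w : Fin n} {p : G.Walk u w} (hp : p.IsTrail) (v : Fin n) :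
    deg n p.edges.toFinset v = p.edges.countP (fun e => v ∈ e) := by
  rw [deg, List.filter_toFinset, List.toFinset_card_of_nodup (hp.edges_nodup.filter _),
    List.countP_eq_length_filter]

theorem odd_deg_edges_toFinset_iff_of_isTrail {n : ℕ} {G : SimpleGraph (Fin n)}
    {s t : Fin n} (hst : s ≠ t) {p : G.Walk s t} (hp : p.IsTrail) (v : Fin n) :
    Odd (deg n p.edges.toFinset v) ↔ v = s ∨ v = t := by
  rw [← Nat.not_even_iff_odd, deg_edges_toFinset_of_isTrail hp, hp.even_countP_edges_iff]
  tauto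

theorem walk_edges_toFinset_subset {n : ℕ} {H : Finset (Sym2 (Fin n))} {u w : Fin n}
    (p : (SimpleGraph.fromEdgeSet (H : Set (Sym2 (Fin n)))).Walk u w) :
    p.edges.toFinset ⊆ H := fun _ he =>
  (SimpleGraph.edgeSet_fromEdgeSet _ ▸ p.edges_subset_edgeSet (List.mem_toFinset.mp he)).1

theorem mem_wrongParity_iff {n : ℕ} {s t v : Fin n} {H : Finset (Sym2 (Fin n))} :
    v ∈ wrongParity n s t H ↔ (Odd (deg n H v) ↔ ¬(v = s ∨ v = t)) := by
  rw [wrongParity, Finset.mem_filter]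
  split_ifs with hv <;> simp [hv, Nat.not_odd_iff_even]

theorem isTJoin_wrongParity_sdiff {n : ℕ} {s t : Fin n} {F H : Finset (Sym2 (Fin n))}
    (hH : H ⊆ Edges n) (hFH : F ⊆ H) (hF : ∀ v, Odd (deg n F v) ↔ v = s ∨ v = t) :
    IsTJoin n (wrongParity n s t H) (H \ F) := by
  refine ⟨Finset.sdiff_subset.trans hH, fun v => ?_⟩
  rw [mem_wrongParity_iff, ← deg_sdiff_add_deg hFH, Nat.odd_add, ← hF v, ← Nat.not_odd_iff_even]
  tauto

theorem tree_minus_path_is_Tjoin_general (n : ℕ) (s t : Fin n) (hst : s ≠ t)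
    (H : Finset (Sym2 (Fin n))) (hH : IsSpanningTree n H)
    (P : (SimpleGraph.fromEdgeSet (H : Set (Sym2 (Fin n)))).Walk s t) (hP : P.IsPath) :
    IsTJoin n (wrongParity n s t H) (H \ P.edges.toFinset) :=
  isTJoin_wrongParity_sdiff hH.1 (walk_edges_toFinset_subset P)
    (odd_deg_edges_toFinset_iff_of_isTrail hst hP.isTrail)

/-- (Tree minus its `s`–`t` path is a `T`-join.) If `H` is a spanning
tree and `P` is the path in `H` between `s` and `t`, then `H \ P` is a `T`-join for the
wrong-parity set `T` of `H`. -/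
theorem tree_minus_path_is_Tjoin (n : ℕ) (hn : 2 ≤ n) (s t : Fin n) (hst : s ≠ t)
    (H : Finset (Sym2 (Fin n))) (hH : IsSpanningTree n H)
    (P : (SimpleGraph.fromEdgeSet (H : Set (Sym2 (Fin n)))).Walk s t) (hP : P.IsPath) :
    IsTJoin n (wrongParity n s t H) (H \ P.edges.toFinset) :=
  tree_minus_path_is_Tjoin_general n s t hst H hH P hP

end
end TSPPath
end

section
/- (Shortcutting an Eulerian multigraph to a Hamiltonian path.) Let c be a metric on V and let L be a finite multiset of edges of the complete graph on V such that the multigraph (V, L) is connected, the vertices s and t have odd degree in (V, L), and every other vertex has even degree in (V, L). Then there exists a Hamiltonian path from s to t in the complete graph on V whose cost is at most ∑_{e ∈ L} c(e) (counted with multiplicity). -/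
open Finset

namespace TSPPath

noncomputable section
open scoped Classical

/-!
Hierholzer's argument gives an Eulerian `s`–`t` trail: a maximal trail from `s` can only get
stuck at `t`, the unused edges then form an even multigraph, and, by connectivity, one of them
meets the trail; a maximal trail from there in the unused edges is closed and can be spliced in.
The Eulerian trail visits every vertex and costs `c(L)`. Keeping its first `s`, its last `t`
and one occurrence of every other vertex yields a Hamiltonian path, which by the triangle
inequality costs no more.
-/

variable {n : ℕ}

lemma walkEdges_cons_cons (a b : Fin n) (l : List (Fin n)) :
    walkEdges n (a :: b :: l) = s(a, b) ::ₘ walkEdges n (b :: l) := rfl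

lemma walkEdges_append_cons (y : Fin n) (B : List (Fin n)) :
    ∀ A : List (Fin n), walkEdges n (A ++ y :: B) = walkEdges n (A ++ [y]) + walkEdges n (y :: B)
  | [] => by simp [walkEdges]
  | [a] => by simp [walkEdges]
  | a :: a' :: A => by
      have ih := walkEdges_append_cons y B (a' :: A)
      simp only [List.cons_append] at ih ⊢
      rw [walkEdges_cons_cons, ih, walkEdges_cons_cons, Multiset.cons_add]

lemma mem_of_mem_walkEdges {l : List (Fin n)} {e : Sym2 (Fin n)} (he : e ∈ walkEdges n l)
    {x : Fin n} (hx : x ∈ e) : x ∈ l := by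
  obtain ⟨⟨a, b⟩, hab, rfl⟩ := List.mem_map.mp (Multiset.mem_coe.mp he)
  rcases Sym2.mem_iff.mp hx with rfl | rfl
  · exact List.of_mem_zip hab |>.1
  · exact List.mem_of_mem_tail (List.of_mem_zip hab).2

lemma mdeg_cons (e : Sym2 (Fin n)) (A : Multiset (Sym2 (Fin n))) (x : Fin n) :
    mdeg n (e ::ₘ A) x = (if x ∈ e then 1 else 0) + mdeg n A x := by
  by_cases h : x ∈ e <;> simp [mdeg, h, add_comm]

lemma mdeg_sub {A B : Multiset (Sym2 (Fin n))} (h : B ≤ A) (x : Fin n) :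
    mdeg n (A - B) x = mdeg n A x - mdeg n B x := by
  rw [mdeg, Multiset.filter_sub, Multiset.card_sub (Multiset.filter_le_filter _ h)]; rfl

lemma mdeg_mono {A B : Multiset (Sym2 (Fin n))} (h : A ≤ B) (x : Fin n) :
    mdeg n A x ≤ mdeg n B x :=
  Multiset.card_le_card (Multiset.filter_le_filter _ h)

lemma mdeg_eq_zero_iff {A : Multiset (Sym2 (Fin n))} {x : Fin n} :
    mdeg n A x = 0 ↔ ∀ e ∈ A, x ∉ e := by
  simp [mdeg, Multiset.filter_eq_nil]

-- `x = a ↔ x = b` says that `x` is not an odd vertex: the odd vertices are `a` and `b` when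
-- `a ≠ b`, and there are none when `a = b`.
lemma even_mdeg_walkEdges_iff : ∀ {l : List (Fin n)} {a b : Fin n}, l.head? = some a →
    l.getLast? = some b → (∀ e ∈ walkEdges n l, ¬ e.IsDiag) →
    ∀ x, Even (mdeg n (walkEdges n l) x) ↔ (x = a ↔ x = b)
  | [], _, _, ha, _, _ => by simp at ha
  | [c], a, b, ha, hb, _ => by
      simp only [List.head?_cons, List.getLast?_singleton, Option.some.injEq] at ha hb
      subst ha hb
      simp [walkEdges, mdeg]
  | c :: d :: l, a, b, ha, hb, hloop => by
      simp only [List.head?_cons, Option.some.injEq] at ha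
      subst ha
      rw [walkEdges_cons_cons] at hloop
      have hcd : c ≠ d := by simpa using hloop _ (Multiset.mem_cons_self _ _)
      have ih := even_mdeg_walkEdges_iff (l := d :: l) rfl (by rwa [List.getLast?_cons_cons] at hb)
        (fun e he => hloop e (Multiset.mem_cons_of_mem he))
      intro x
      rw [walkEdges_cons_cons, mdeg_cons, Nat.even_add, ih x]
      by_cases hxc : x = c <;> by_cases hxd : x = d <;> simp_all

lemma exists_maximal_trail (L : Multiset (Sym2 (Fin n))) (v : Fin n) :
    ∃ (w : List (Fin n)) (u : Fin n), w.head? = some v ∧ w.getLast? = some u ∧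
      walkEdges n w ≤ L ∧ mdeg n (L - walkEdges n w) u = 0 := by
  induction L using Multiset.strongInductionOn generalizing v with
  | ih L ih =>
  by_cases hv : mdeg n L v = 0
  · exact ⟨[v], v, rfl, rfl, Multiset.zero_le _, by simpa [walkEdges] using hv⟩
  obtain ⟨e, he, hve⟩ : ∃ e ∈ L, v ∈ e := by simpa [mdeg_eq_zero_iff] using hv
  obtain ⟨x, rfl⟩ := Sym2.mem_iff_exists.mp hve
  obtain ⟨w, u, hw, hu, hwL, hstuck⟩ := ih _ (Multiset.erase_lt.mpr he) x
  obtain ⟨r, rfl⟩ : ∃ r, w = x :: r := by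
    cases w <;> simp_all
  refine ⟨v :: x :: r, u, rfl, by rwa [List.getLast?_cons_cons], ?_, ?_⟩
  · rw [walkEdges_cons_cons, ← Multiset.cons_erase he]
    exact Multiset.cons_le_cons _ hwL
  · rwa [walkEdges_cons_cons, Multiset.sub_cons]

section Parity

variable {L : Multiset (Sym2 (Fin n))} {a b : Fin n} {w : List (Fin n)}

lemma even_mdeg_sub_walkEdges (hloop : ∀ e ∈ L, ¬ e.IsDiag)
    (hpar : ∀ x, Even (mdeg n L x) ↔ (x = a ↔ x = b)) (ha : w.head? = some a)
    (hb : w.getLast? = some b) (hwL : walkEdges n w ≤ L) (x : Fin n) :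
    Even (mdeg n (L - walkEdges n w) x) := by
  rw [mdeg_sub hwL, Nat.even_sub (mdeg_mono hwL x), hpar,
    even_mdeg_walkEdges_iff ha hb (fun e he => hloop e (Multiset.mem_of_le hwL he))]

lemma eq_of_maximal_trail (hloop : ∀ e ∈ L, ¬ e.IsDiag)
    (hpar : ∀ x, Even (mdeg n L x) ↔ (x = a ↔ x = b)) {u : Fin n} (ha : w.head? = some a)
    (hu : w.getLast? = some u) (hwL : walkEdges n w ≤ L)
    (hstuck : mdeg n (L - walkEdges n w) u = 0) : u = b := by
  have hdeg : mdeg n L u = mdeg n (walkEdges n w) u := by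
    rw [mdeg_sub hwL] at hstuck
    exact le_antisymm (Nat.sub_eq_zero_iff_le.mp hstuck) (mdeg_mono hwL u)
  have h := hpar u
  rw [hdeg, even_mdeg_walkEdges_iff ha hu (fun e he => hloop e (Multiset.mem_of_le hwL he))] at h
  tauto

end Parity

lemma exists_mem_mdeg_sub_ne_zero {L : Multiset (Sym2 (Fin n))} {w : List (Fin n)} {a : Fin n}
    (hreach : ∀ x, (SimpleGraph.fromEdgeSet {e | e ∈ L}).Reachable a x) (ha : a ∈ w)
    (hwL : walkEdges n w ≤ L) (hrest : L - walkEdges n w ≠ 0) :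
    ∃ y ∈ w, mdeg n (L - walkEdges n w) y ≠ 0 := by
  by_contra! hzero
  obtain ⟨e, he⟩ := Multiset.exists_mem_of_ne_zero hrest
  obtain ⟨z, z', rfl⟩ : ∃ z z', e = s(z, z') := ⟨_, _, (Quot.out_eq e).symm⟩
  have hz : z ∉ w := fun hz => mdeg_eq_zero_iff.mp (hzero z hz) _ he (Sym2.mem_mk_left _ _)
  -- a walk from `a` to `z` leaves `w` through an edge of `L`, which can lie neither on `w`
  -- nor in the rest
  obtain ⟨d, -, hd, hd'⟩ := (hreach z).some.exists_boundary_dart {x | x ∈ w} ha hz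
  have hdL : s(d.fst, d.snd) ∈ walkEdges n w + (L - walkEdges n w) := by
    rw [add_tsub_cancel_of_le hwL]
    exact ((SimpleGraph.fromEdgeSet_adj _).mp d.adj).1
  rcases Multiset.mem_add.mp hdL with hdw | hdr
  · exact hd' (mem_of_mem_walkEdges hdw (Sym2.mem_mk_right _ _))
  · exact mdeg_eq_zero_iff.mp (hzero _ hd) _ hdr (Sym2.mem_mk_left _ _)

lemma walkEdges_splice {p q z : List (Fin n)} {y : Fin n} (hz : z.head? = some y)
    (hz' : z.getLast? = some y) :
    walkEdges n (p ++ z ++ q) = walkEdges n (p ++ y :: q) + walkEdges n z := by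
  obtain ⟨r, rfl⟩ : ∃ r, z = y :: r := by cases z <;> simp_all
  obtain ⟨r', hr'⟩ : ∃ r', y :: r = r' ++ [y] := by
    obtain ⟨r', y', h⟩ := List.eq_nil_or_concat (y :: r) |>.resolve_left (by simp)
    simp_all
  have hzq : y :: (r ++ q) = r' ++ y :: q := by
    rw [← List.cons_append, hr', List.append_assoc, List.singleton_append]
  calc walkEdges n (p ++ y :: r ++ q)
      = walkEdges n (p ++ [y]) + (walkEdges n (r' ++ [y]) + walkEdges n (y :: q)) := by
        rw [List.append_assoc, List.cons_append, walkEdges_append_cons y (r ++ q) p, hzq,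
          walkEdges_append_cons y q r']
    _ = walkEdges n (p ++ y :: q) + walkEdges n (y :: r) := by
        rw [walkEdges_append_cons y q p, hr']
        abel

lemma head?_splice {α : Type*} {p q z : List α} {y : α} (hz : z.head? = some y) :
    (p ++ z ++ q).head? = (p ++ y :: q).head? := by
  simp [List.head?_append, hz]

lemma getLast?_splice {α : Type*} {p q z : List α} {y : α} (hz : z.getLast? = some y) :
    (p ++ z ++ q).getLast? = (p ++ y :: q).getLast? := by
  simp [List.getLast?_append, hz, List.getLast?_cons]

section Hierholzer

variable {L : Multiset (Sym2 (Fin n))} {a b : Fin n}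

lemma exists_isEulerianTrail_of_trail (hloop : ∀ e ∈ L, ¬ e.IsDiag)
    (hreach : ∀ x, (SimpleGraph.fromEdgeSet {e | e ∈ L}).Reachable a x) (w : List (Fin n))
    (ha : w.head? = some a) (hb : w.getLast? = some b) (hwL : walkEdges n w ≤ L)
    (heven : ∀ x, Even (mdeg n (L - walkEdges n w) x)) :
    ∃ w', IsEulerianTrail n L a b w' := by
  induction hk : (L - walkEdges n w).card using Nat.strong_induction_on generalizing w with
  | _ k ih =>
  set R := L - walkEdges n w with hR
  by_cases hR0 : R = 0
  · exact ⟨w, ha, hb, le_antisymm hwL (tsub_eq_zero_iff_le.mp hR0)⟩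
  obtain ⟨y, hyw, hy⟩ := exists_mem_mdeg_sub_ne_zero hreach
    (List.mem_of_mem_head? (by rw [ha]; rfl)) hwL hR0
  have hRloop : ∀ e ∈ R, ¬ e.IsDiag := fun e he => hloop e (Multiset.mem_of_le tsub_le_self he)
  have hRpar : ∀ x, Even (mdeg n R x) ↔ (x = y ↔ x = y) := by simpa using heven
  -- an even multigraph contains a closed trail through every non-isolated vertex
  obtain ⟨z, u, hz, hzu, hzR, hstuck⟩ := exists_maximal_trail R y
  obtain rfl := eq_of_maximal_trail hRloop hRpar hz hzu hzR hstuck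
  have hz0 : walkEdges n z ≠ 0 := by
    rintro h
    rw [h, tsub_zero] at hstuck
    exact hy hstuck
  obtain ⟨p, q, rfl⟩ := List.append_of_mem hyw
  refine ih _ ?_ (p ++ z ++ q) ?_ ?_ ?_ ?_ rfl
  · rw [walkEdges_splice hz hzu, ← tsub_tsub, ← hk, Multiset.card_sub hzR]
    have := Multiset.card_pos.mpr hz0
    have := Multiset.card_le_card hzR
    omega
  · rwa [head?_splice hz]
  · rwa [getLast?_splice hzu]
  · rw [walkEdges_splice hz hzu]
    exact (le_tsub_iff_left hwL).mp hzR
  · rw [walkEdges_splice hz hzu, ← tsub_tsub]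
    exact even_mdeg_sub_walkEdges hRloop hRpar hz hzu hzR

end Hierholzer

theorem exists_isEulerianTrail {L : Multiset (Sym2 (Fin n))} {a b : Fin n}
    (hloop : ∀ e ∈ L, ¬ e.IsDiag) (hconn : MConnected n L)
    (hpar : ∀ x, Even (mdeg n L x) ↔ (x = a ↔ x = b)) :
    ∃ w, IsEulerianTrail n L a b w := by
  obtain ⟨w, u, ha, hu, hwL, hstuck⟩ := exists_maximal_trail L a
  obtain rfl := eq_of_maximal_trail hloop hpar ha hu hwL hstuck
  exact exists_isEulerianTrail_of_trail hloop (SimpleGraph.Connected.preconnected hconn a) w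
    ha hu hwL (even_mdeg_sub_walkEdges hloop hpar ha hu hwL)

lemma mem_of_isEulerianTrail {L : Multiset (Sym2 (Fin n))} {a b : Fin n} {w : List (Fin n)}
    (hconn : MConnected n L) (hw : IsEulerianTrail n L a b w) (v : Fin n) : v ∈ w := by
  obtain ⟨p⟩ := SimpleGraph.Connected.preconnected hconn v a
  cases p with
  | nil => exact List.mem_of_mem_head? (by rw [hw.1]; rfl)
  | cons hadj _ =>
    rw [SimpleGraph.fromEdgeSet_adj] at hadj
    exact mem_of_mem_walkEdges (hw.2.2 ▸ hadj.1) (Sym2.mem_mk_left _ _)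

section Shortcut

variable {c : Fin n → Fin n → ℝ}

def trailCost (c : Fin n → Fin n → ℝ) (l : List (Fin n)) : ℝ :=
  ((walkEdges n l).map (ecost n c)).sum

lemma trailCost_cons_cons (a b : Fin n) (l : List (Fin n)) :
    trailCost c (a :: b :: l) = ecost n c s(a, b) + trailCost c (b :: l) := by
  simp [trailCost, walkEdges_cons_cons]

lemma ecost_nonneg (hnonneg : ∀ u v, 0 ≤ c u v) (e : Sym2 (Fin n)) : 0 ≤ ecost n c e := by
  induction e using Sym2.ind with
  | _ u v => simp only [ecost, Sym2.lift_mk]; linarith [hnonneg u v, hnonneg v u]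

lemma ecost_triangle (htri : ∀ u v w, c u w ≤ c u v + c v w) (u v w : Fin n) :
    ecost n c s(u, w) ≤ ecost n c s(u, v) + ecost n c s(v, w) := by
  simp only [ecost, Sym2.lift_mk]
  linarith [htri u v w, htri w v u]

lemma trailCost_cons_le_of_sublist (hnonneg : ∀ u v, 0 ≤ c u v)
    (htri : ∀ u v w, c u w ≤ c u v + c v w) {l l' : List (Fin n)} (h : l.Sublist l')
    (a : Fin n) :
    trailCost c (a :: l) ≤ trailCost c (a :: l') := by
  induction h generalizing a with
  | slnil => rfl
  | @cons l l' b _ ih =>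
    refine (ih a).trans ?_
    rw [trailCost_cons_cons]
    cases l' with
    | nil => simpa [trailCost, walkEdges] using ecost_nonneg hnonneg _
    | cons x l' =>
      rw [trailCost_cons_cons, trailCost_cons_cons]
      linarith [ecost_triangle htri a b x]
  | @cons_cons l l' b _ ih =>
    rw [trailCost_cons_cons, trailCost_cons_cons]
    linarith [ih b]

end Shortcut

lemma walkEdges_support_eq_edges {G : SimpleGraph (Fin n)} {a b : Fin n} (p : G.Walk a b) :
    walkEdges n p.support = (p.edges : Multiset (Sym2 (Fin n))) := by
  rw [SimpleGraph.Walk.edges_eq_zipWith_support, walkEdges, List.map_zip_eq_zipWith]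
  rfl

lemma exists_eq_cons_append_singleton {α : Type*} {l : List α} {a b : α}
    (ha : l.head? = some a) (hb : l.getLast? = some b) (hab : a ≠ b) :
    ∃ mid, l = a :: (mid ++ [b]) := by
  obtain ⟨r, rfl⟩ : ∃ r, l = a :: r := by cases l <;> simp_all
  obtain ⟨mid, b', rfl⟩ := (List.eq_nil_or_concat r).resolve_left (by rintro rfl; simp_all)
  rw [List.concat_eq_append, ← List.cons_append, List.getLast?_concat, Option.some.injEq] at hb
  exact ⟨mid, by rw [List.concat_eq_append, hb]⟩

lemma exists_sublist_nodup_cons_append {α : Type*} [DecidableEq α] {s t : α} (hst : s ≠ t)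
    (l : List α) :
    ∃ m, m.Sublist l ∧ (s :: (m ++ [t])).Nodup ∧
      ∀ v ∈ s :: (l ++ [t]), v ∈ s :: (m ++ [t]) := by
  refine ⟨(l.filter (fun v => v ≠ s ∧ v ≠ t)).dedup,
    (List.dedup_sublist _).trans List.filter_sublist, ?_, ?_⟩
  · simp [List.nodup_cons, List.nodup_append, List.nodup_dedup, hst]
  · intro v hv
    by_cases hvs : v = s <;> by_cases hvt : v = t <;> simp_all

lemma exists_walk_support_eq {V : Type*} {G : SimpleGraph V} {l : List V} {a b : V}
    (hl : l.IsChain G.Adj) (ha : l.head? = some a) (hb : l.getLast? = some b) :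
    ∃ p : G.Walk a b, p.support = l := by
  have hne : l ≠ [] := by rintro rfl; simp at ha
  have ha' : l.head hne = a := by simpa [List.head?_eq_some_head hne] using ha
  have hb' : l.getLast hne = b := by simpa [List.getLast?_eq_some_getLast hne] using hb
  exact ⟨(SimpleGraph.Walk.ofSupport l hne hl).copy ha' hb', by simp⟩

theorem shortcut_eulerian_general (n : ℕ) (s t : Fin n) (hst : s ≠ t)
    (c : Fin n → Fin n → ℝ) (hc : IsMetric n c)
    (L : Multiset (Sym2 (Fin n))) (hLd : ∀ e ∈ L, ¬ e.IsDiag)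
    (hconn : MConnected n L)
    (hs : Odd (mdeg n L s)) (ht : Odd (mdeg n L t))
    (hother : ∀ v : Fin n, v ≠ s → v ≠ t → Even (mdeg n L v)) :
    ExistsHamPath n s t c (L.map (ecost n c)).sum := by
  have hpar : ∀ x, Even (mdeg n L x) ↔ (x = s ↔ x = t) := by
    intro x
    by_cases hxs : x = s
    · subst hxs; simpa [hst] using hs
    by_cases hxt : x = t
    · subst hxt; simpa [hxs] using ht
    simpa [hxs, hxt] using hother x hxs hxt
  obtain ⟨w, hw⟩ := exists_isEulerianTrail hLd hconn hpar
  have hcover := mem_of_isEulerianTrail hconn hw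
  obtain ⟨mid, rfl⟩ := exists_eq_cons_append_singleton hw.1 hw.2.1 hst
  obtain ⟨m, hm, hnodup, hmcover⟩ := exists_sublist_nodup_cons_append hst mid
  have hchain : (s :: (m ++ [t])).IsChain (⊤ : SimpleGraph (Fin n)).Adj :=
    hnodup.isChain.imp fun _ _ h => (SimpleGraph.top_adj _ _).mpr h
  obtain ⟨p, hsupp⟩ := exists_walk_support_eq (b := t) hchain rfl
    (by rw [← List.cons_append, List.getLast?_append_cons]; rfl)
  refine ⟨p, fun v => List.count_eq_one_of_mem (hsupp ▸ hnodup) (hsupp ▸ hmcover v (hcover v)),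
    ?_⟩
  calc (p.edges.map (ecost n c)).sum = trailCost c p.support := by
        rw [trailCost, walkEdges_support_eq_edges, Multiset.map_coe, Multiset.sum_coe]
    _ ≤ trailCost c (s :: (mid ++ [t])) :=
        hsupp ▸ trailCost_cons_le_of_sublist hc.1 hc.2.2.2 (hm.append_right _) s
    _ = (L.map (ecost n c)).sum := by rw [trailCost, hw.2.2]

/-- (Shortcutting an Eulerian multigraph to a Hamiltonian path.)
If the multigraph `(V, L)` is connected, `s` and `t` have odd degree and all other
vertices even degree, then there is a Hamiltonian `s`–`t` path of cost at most the
total cost of `L` (with multiplicity), for any metric `c`. -/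
theorem shortcut_eulerian (n : ℕ) (hn : 2 ≤ n) (s t : Fin n) (hst : s ≠ t)
    (c : Fin n → Fin n → ℝ) (hc : IsMetric n c)
    (L : Multiset (Sym2 (Fin n))) (hLd : ∀ e ∈ L, ¬ e.IsDiag)
    (hconn : MConnected n L)
    (hs : Odd (mdeg n L s)) (ht : Odd (mdeg n L t))
    (hother : ∀ v : Fin n, v ≠ s → v ≠ t → Even (mdeg n L v)) :
    ExistsHamPath n s t c (L.map (ecost n c)).sum :=
  shortcut_eulerian_general n s t hst c hc L hLd hconn hs ht hother

end
end TSPPath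
end
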